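/- Extreme points of the state-action polytope have at most |S| supported pairs: any vertex y of the polytope {y ≥ 0 : ∑_{s,a} y(s,a) = 1, ∑_a y(s',a) − ∑_{s,a} p(s'|s,a) y(s,a) = 0 ∀ s'} has at most |S| nonzero coordinates. -/

import Mathlib

/-! If `y` had more than `|S|` nonzero coordinates, the constraint map restricted to functions
supported on the support of `y` would have a nontrivial kernel, since its range has dimension at
most `|S|`: because `p` is row-stochastic, the flow-balance components of every constraint vector
sum to zero. Moving `y` by `±ε` along a kernel vector stays in the polytope for small `ε`, so `y`
is not extreme. -/

open Finset Module Filter Topology LinearMap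

theorem eq_zero_of_add_mem_of_sub_mem_of_mem_extremePoints {𝕜 E : Type*} [Field 𝕜]
    [LinearOrder 𝕜] [IsStrictOrderedRing 𝕜] [AddCommGroup E] [Module 𝕜 E] {P : Set E} {y v : E}
    (hy : y ∈ P.extremePoints 𝕜) (hadd : y + v ∈ P) (hsub : y - v ∈ P) : v = 0 := by
  have : Invertible (2 : 𝕜) := invertibleOfNonzero two_ne_zero
  simpa using hy.2 hadd hsub (mem_openSegment_add_sub y v)

theorem eventually_nonneg_add_smul {ι : Type*} [Finite ι] {y z : ι → ℝ} (hy : 0 ≤ y)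
    (hz : ∀ i, y i = 0 → z i = 0) : ∀ᶠ t in 𝓝 (0 : ℝ), 0 ≤ y + t • z := by
  have h : ∀ i, ∀ᶠ t in 𝓝 (0 : ℝ), 0 ≤ y i + t * z i := by
    intro i
    rcases (hy i).eq_or_lt with h0 | hpos
    · simp [hz i h0.symm, ← h0]
    · have hc : Continuous fun t : ℝ => y i + t * z i := by fun_prop
      exact ((hc.tendsto 0).eventually (lt_mem_nhds (by simpa using hpos))).mono fun _ => le_of_lt
  filter_upwards [eventually_all.2 h] with t ht i using ht i

theorem exists_ne_zero_map_eq_zero_of_finrank_range_lt {K ι V : Type*} [Field K] [Fintype ι]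
    [AddCommGroup V] [Module K V] (L : (ι → K) →ₗ[K] V) (s : Finset ι)
    (hs : finrank K (range L) < #s) : ∃ z, z ≠ 0 ∧ L z = 0 ∧ ∀ i ∉ s, z i = 0 := by
  set E := Function.ExtendByZero.linearMap K ((↑) : s → ι)
  have hE : Function.Injective E := Function.extend_injective Subtype.val_injective (0 : ι → K)
  have hker : ker (L ∘ₗ E) ≠ ⊥ := by
    intro hbot
    have hrank := (L ∘ₗ E).finrank_range_add_finrank_ker
    have hle := Submodule.finrank_mono (range_comp_le_range E L)
    rw [hbot, finrank_bot, finrank_fintype_fun_eq_card, Fintype.card_coe] at hrank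
    omega
  obtain ⟨w, hw, hw0⟩ := Submodule.ne_bot_iff _ |>.1 hker
  refine ⟨E w, (map_ne_zero_iff E hE).2 hw0, hw, fun i hi => ?_⟩
  exact Function.extend_apply' _ _ _ fun ⟨j, hj⟩ => hi (hj ▸ j.2)

theorem card_filter_ne_zero_le_finrank_range_of_mem_extremePoints {ι V : Type*} [Fintype ι]
    [AddCommGroup V] [Module ℝ V] (L : (ι → ℝ) →ₗ[ℝ] V) (b : V) {y : ι → ℝ}
    (hy : y ∈ Set.extremePoints ℝ {x | 0 ≤ x ∧ L x = b}) :
    #{i | y i ≠ 0} ≤ finrank ℝ (range L) := by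
  by_contra! hlt
  obtain ⟨z, hz0, hLz, hzy⟩ := exists_ne_zero_map_eq_zero_of_finrank_range_lt L _ hlt
  obtain ⟨hy0, hLy⟩ := hy.1
  obtain ⟨ε, hε, hnonneg⟩ := Metric.eventually_nhds_iff.1 <|
    eventually_nonneg_add_smul hy0 fun i hi => hzy i (by simpa using hi)
  have hmem : ∀ t, |t| < ε → y + t • z ∈ {x | 0 ≤ x ∧ L x = b} := fun t ht =>
    ⟨hnonneg (by simpa using ht), by simp [hLy, hLz]⟩
  have hsmul := eq_zero_of_add_mem_of_sub_mem_of_mem_extremePoints hy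
    (hmem (ε / 2) (by rw [abs_of_pos (by positivity)]; linarith))
    (by simpa [sub_eq_add_neg] using
      hmem (-(ε / 2)) (by rw [abs_neg, abs_of_pos (by positivity)]; linarith))
  exact hz0 ((smul_eq_zero.1 hsmul).resolve_left (by positivity))

section StateAction

variable {S A : Type*} [Fintype S] [Fintype A]

def stateActionConstraint (p : S → A → S → ℝ) : (S × A → ℝ) →ₗ[ℝ] ℝ × (S → ℝ) where
  toFun y := (∑ sa, y sa, fun s' => ∑ a, y (s', a) - ∑ s, ∑ a, p s a s' * y (s, a))
  map_add' y z := by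
    ext <;> simp [sum_add_distrib, mul_add]; ring
  map_smul' c y := by
    ext <;> simp [mul_sum, mul_sub, mul_left_comm]

theorem sum_snd_stateActionConstraint_eq_zero {p : S → A → S → ℝ}
    (hp : ∀ s a, ∑ s', p s a s' = 1) (y : S × A → ℝ) :
    ∑ s', (stateActionConstraint p y).2 s' = 0 := by
  have hinflow : ∑ s', ∑ s, ∑ a, p s a s' * y (s, a) = ∑ s, ∑ a, y (s, a) := by
    rw [sum_comm]
    refine sum_congr rfl fun s _ => ?_
    rw [sum_comm]
    simp [← sum_mul, hp]
  simp [stateActionConstraint, sum_sub_distrib, hinflow]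

theorem finrank_range_stateActionConstraint_le [Nonempty S] {p : S → A → S → ℝ}
    (hp : ∀ s a, ∑ s', p s a s' = 1) :
    finrank ℝ (range (stateActionConstraint p)) ≤ Fintype.card S := by
  classical
  have hne : range (stateActionConstraint p) ≠ ⊤ := by
    intro htop
    obtain ⟨y, hy⟩ : ((0 : ℝ), Pi.single (Classical.arbitrary S) (1 : ℝ)) ∈
        range (stateActionConstraint p) := htop ▸ Submodule.mem_top
    simpa [hy] using sum_snd_stateActionConstraint_eq_zero hp y
  have := Submodule.finrank_lt hne
  rw [finrank_prod, finrank_self, finrank_fintype_fun_eq_card] at this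
  omega

end StateAction

theorem stmt_10_general {S A : Type*} [Fintype S] [Fintype A] [Nonempty S]
    (p : S → A → S → ℝ)
    (hp1 : ∀ s a, ∑ s', p s a s' = 1)
    (P : Set (S × A → ℝ))
    (hP : P = {y | (∀ sa, 0 ≤ y sa) ∧ (∑ sa : S × A, y sa = 1) ∧
      (∀ s', ∑ a, y (s', a) = ∑ s, ∑ a, p s a s' * y (s, a))})
    (y : S × A → ℝ) (hy : y ∈ Set.extremePoints ℝ P) :
    (Finset.univ.filter (fun sa => y sa ≠ 0)).card ≤ Fintype.card S := by
  have hP' : P = {x | 0 ≤ x ∧ stateActionConstraint p x = (1, 0)} := by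
    ext x
    simp [hP, stateActionConstraint, Pi.le_def, funext_iff, sub_eq_zero]
  rw [hP'] at hy
  exact (card_filter_ne_zero_le_finrank_range_of_mem_extremePoints _ _ hy).trans
    (finrank_range_stateActionConstraint_le hp1)

theorem stmt_10 {S A : Type*} [Fintype S] [Fintype A] [Nonempty S] [Nonempty A]
    [DecidableEq (S × A)]
    (p : S → A → S → ℝ)
    (hp0 : ∀ s a s', 0 ≤ p s a s')
    (hp1 : ∀ s a, ∑ s', p s a s' = 1)
    (P : Set (S × A → ℝ))
    (hP : P = {y | (∀ sa, 0 ≤ y sa) ∧ (∑ sa : S × A, y sa = 1) ∧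
      (∀ s', ∑ a, y (s', a) = ∑ s, ∑ a, p s a s' * y (s, a))})
    (y : S × A → ℝ) (hy : y ∈ Set.extremePoints ℝ P) :
    (Finset.univ.filter (fun sa => y sa ≠ 0)).card ≤ Fintype.card S :=
  stmt_10_general p hp1 P hP y hy
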